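/- arXiv:2504.16835 — 2 statements merged into one kernel-verified Lean document; each statement's English description precedes it below -/
import Mathlib

section
/- If f : ℝⁿ → ℝ is differentiable and strongly convex on a nonempty closed convex set Ω, then for every u the supremum defining f*(u) = sup_{x ∈ Ω} (⟨x,u⟩ - f(x)) is attained at a unique point of Ω. -/
open scoped RealInnerProductSpace

/-- If `f` is differentiable and `μ`-strongly convex on a nonempty closed convex set `Ω`,
then for every `u` the supremum defining `f*(u) = sup_{x ∈ Ω} (⟪x,u⟫ - f x)` is attained
at a unique point of `Ω`. -/
theorem stmt_1 {n : ℕ} (f : EuclideanSpace ℝ (Fin n) → ℝ)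
    (f' : EuclideanSpace ℝ (Fin n) → EuclideanSpace ℝ (Fin n))
    (Ω : Set (EuclideanSpace ℝ (Fin n))) (μ : ℝ) (hμ : 0 < μ)
    (hΩne : Ω.Nonempty) (hΩclosed : IsClosed Ω) (hΩconvex : Convex ℝ Ω)
    (hdiff : ∀ x ∈ Ω, HasGradientAt f (f' x) x)
    (hstrong : ∀ x ∈ Ω, ∀ y ∈ Ω,
      f y ≥ f x + ⟪y - x, f' x⟫ + (μ / 2) * ‖x - y‖ ^ 2) :
    ∀ u : EuclideanSpace ℝ (Fin n),
      ∃! x, x ∈ Ω ∧ ∀ z ∈ Ω, ⟪z, u⟫ - f z ≤ ⟪x, u⟫ - f x := by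
  intro u
  obtain ⟨x0, hx0⟩ := hΩne
  set C : EuclideanSpace ℝ (Fin n) := u - f' x0 with hC
  set R : ℝ := 2 * ‖C‖ / μ + 1 with hR
  have hRpos : 0 < R := by positivity
  -- coercivity bound: outside the ball, the objective at y is ≤ its value at x0
  have hbound : ∀ y ∈ Ω, R ≤ ‖y - x0‖ → ⟪y, u⟫ - f y ≤ ⟪x0, u⟫ - f x0 := by
    intro y hy hyR
    have h1 := hstrong x0 hx0 y hy
    rw [norm_sub_rev x0 y] at h1
    have h2 : ⟪y - x0, f' x0⟫ = ⟪y - x0, u⟫ - ⟪y - x0, C⟫ := by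
      rw [hC, inner_sub_right]; ring
    have h3 : ⟪y - x0, C⟫ ≤ ‖y - x0‖ * ‖C‖ := real_inner_le_norm _ _
    have h4 : ⟪y - x0, u⟫ = ⟪y, u⟫ - ⟪x0, u⟫ := by rw [inner_sub_left]
    have hCnn : (0:ℝ) ≤ ‖C‖ := norm_nonneg _
    have key : ⟪y, u⟫ - f y ≤ ⟪x0, u⟫ - f x0 + ‖y - x0‖ * ‖C‖ - μ / 2 * ‖y - x0‖ ^ 2 := by
      linarith
    have hle : 2 * ‖C‖ / μ + 1 ≤ ‖y - x0‖ := by rw [← hR]; exact hyR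
    have hle2 : 2 * ‖C‖ ≤ μ * ‖y - x0‖ := by
      have h6 : 2 * ‖C‖ / μ ≤ ‖y - x0‖ := by linarith
      rw [div_le_iff₀ hμ] at h6; linarith
    have hneg : ‖y - x0‖ * ‖C‖ - μ / 2 * ‖y - x0‖ ^ 2 ≤ 0 := by
      nlinarith [mul_le_mul_of_nonneg_left hle2 (norm_nonneg (y - x0))]
    linarith
  -- existence on the compact set
  set K : Set (EuclideanSpace ℝ (Fin n)) := Ω ∩ Metric.closedBall x0 R with hK
  have hKc : IsCompact K := (isCompact_closedBall x0 R).inter_left hΩclosed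
  have hx0K : x0 ∈ K := ⟨hx0, by simpa [Metric.mem_closedBall] using hRpos.le⟩
  have hKne : K.Nonempty := ⟨x0, hx0K⟩
  have hcont : ContinuousOn (fun z => ⟪z, u⟫ - f z) K := by
    apply ContinuousOn.sub
    · exact (Continuous.inner continuous_id continuous_const).continuousOn
    · intro z hz
      exact ((hdiff z hz.1).hasFDerivAt.continuousAt).continuousWithinAt
  obtain ⟨x, hxK, hxmax⟩ := hKc.exists_isMaxOn hKne hcont
  have hxΩ : x ∈ Ω := hxK.1
  have hmax : ∀ z ∈ Ω, ⟪z, u⟫ - f z ≤ ⟪x, u⟫ - f x := by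
    intro z hz
    by_cases hzb : z ∈ Metric.closedBall x0 R
    · exact hxmax ⟨hz, hzb⟩
    · have hzR : R ≤ ‖z - x0‖ := by
        have := Metric.mem_closedBall.not.mp hzb
        rw [dist_eq_norm] at this; linarith [not_le.mp this]
      exact le_trans (hbound z hz hzR) (hxmax hx0K)
  refine ⟨x, ⟨hxΩ, hmax⟩, ?_⟩
  -- uniqueness via midpoint strong convexity
  rintro y ⟨hyΩ, hymax⟩
  set m : EuclideanSpace ℝ (Fin n) := (1/2 : ℝ) • y + (1/2 : ℝ) • x with hm
  have hmΩ : m ∈ Ω := hΩconvex hyΩ hxΩ (by norm_num) (by norm_num) (by norm_num)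
  have h1 := hstrong m hmΩ y hyΩ
  have h2 := hstrong m hmΩ x hxΩ
  have hsum : ⟪y - m, f' m⟫ + ⟪x - m, f' m⟫ = 0 := by
    rw [← inner_add_left]
    have h0 : (y - m) + (x - m) = 0 := by rw [hm]; module
    rw [h0, inner_zero_left]
  have hn1 : ‖m - y‖ ^ 2 = ‖y - x‖ ^ 2 / 4 := by
    have h0 : m - y = (-(1/2) : ℝ) • (y - x) := by rw [hm]; module
    rw [h0, norm_smul]
    simp [norm_sub_rev]
    ring
  have hn2 : ‖m - x‖ ^ 2 = ‖y - x‖ ^ 2 / 4 := by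
    have h0 : m - x = ((1/2) : ℝ) • (y - x) := by rw [hm]; module
    rw [h0, norm_smul]
    simp
    ring
  rw [hn1] at h1
  rw [hn2] at h2
  have hgm : ⟪m, u⟫ - f m ≤ ⟪x, u⟫ - f x := hmax m hmΩ
  have hgy : ⟪x, u⟫ - f x ≤ ⟪y, u⟫ - f y := hymax x hxΩ
  have hinner : ⟪m, u⟫ = (1/2) * ⟪y, u⟫ + (1/2) * ⟪x, u⟫ := by
    rw [hm, inner_add_left, real_inner_smul_left, real_inner_smul_left]
  have hX : ‖y - x‖ ^ 2 ≤ 0 := by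
    nlinarith [h1, h2, hsum, hgm, hgy, hinner, hμ]
  have hn : ‖y - x‖ = 0 := by nlinarith [norm_nonneg (y - x)]
  exact sub_eq_zero.mp (norm_eq_zero.mp hn)
end

section
/- Let S(x, λ, y, μ) be as in the primal-dual Lagrangian: S = f(x) + xᵀBy - g(y) + λᵀL₁x - μᵀL₂y + (1/2)xᵀL₁x - (1/2)yᵀL₂y with f, g strictly convex differentiable, L₁, L₂ symmetric PSD with kernels equal to the consensus subspaces. If (x*, λ*, y*, μ*) is a saddle point and S(x, λ*, y*, μ) = S(x*, λ, y, μ*) for some point (x, λ, y, μ) with L₁x = 0 achievable, then x = x* and y = y*. -/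
open Matrix

/-- For the primal-dual Lagrangian `S` with `f, g` strictly convex differentiable and
`L₁, L₂` symmetric PSD whose kernels are the consensus subspaces: if
`(x*, λ*, y*, μ*)` is a saddle point (min in `(x,μ)`, max in `(y,λ)`) and the duality
gap vanishes at a point `(x, λ, y, μ)` satisfying the consensus constraints
`L₁ x = 0`, `L₂ y = 0`, then `x = x*` and `y = y*`. -/
theorem stmt_17 {m n : ℕ} (f : (Fin m → ℝ) → ℝ) (g : (Fin n → ℝ) → ℝ)
    (hf : StrictConvexOn ℝ Set.univ f) (hg : StrictConvexOn ℝ Set.univ g)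
    (hfd : Differentiable ℝ f) (hgd : Differentiable ℝ g)
    (B : Matrix (Fin m) (Fin n) ℝ)
    (L₁ : Matrix (Fin m) (Fin m) ℝ) (L₂ : Matrix (Fin n) (Fin n) ℝ)
    (hL₁ : L₁.PosSemidef) (hL₂ : L₂.PosSemidef)
    (hker₁ : ∀ v : Fin m → ℝ, L₁.mulVec v = 0 ↔ ∀ i j, v i = v j)
    (hker₂ : ∀ w : Fin n → ℝ, L₂.mulVec w = 0 ↔ ∀ i j, w i = w j)
    (S : (Fin m → ℝ) → (Fin m → ℝ) → (Fin n → ℝ) → (Fin n → ℝ) → ℝ)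
    (hS : ∀ x lam y mu, S x lam y mu =
      f x + x ⬝ᵥ B.mulVec y - g y + lam ⬝ᵥ L₁.mulVec x - mu ⬝ᵥ L₂.mulVec y
        + (1 / 2) * (x ⬝ᵥ L₁.mulVec x) - (1 / 2) * (y ⬝ᵥ L₂.mulVec y))
    (xs lams : Fin m → ℝ) (ys mus : Fin n → ℝ)
    (hsaddle : ∀ (x lam : Fin m → ℝ) (y mu : Fin n → ℝ),
      S xs lam y mus ≤ S xs lams ys mus ∧ S xs lams ys mus ≤ S x lams ys mu)
    (hxs : L₁.mulVec xs = 0) (hys : L₂.mulVec ys = 0)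
    (x lam : Fin m → ℝ) (y mu : Fin n → ℝ)
    (hx : L₁.mulVec x = 0) (hy : L₂.mulVec y = 0)
    (hgap : S x lams ys mu = S xs lam y mus) :
    x = xs ∧ y = ys := by
  -- value formulas on the constraint sets
  have val₁ : ∀ (x' : Fin m → ℝ) (mu' : Fin n → ℝ), L₁.mulVec x' = 0 →
      S x' lams ys mu' = f x' + x' ⬝ᵥ B.mulVec ys - g ys := by
    intro x' mu' h
    rw [hS]; simp [h, hys]
  have val₂ : ∀ (y' : Fin n → ℝ) (lam' : Fin m → ℝ), L₂.mulVec y' = 0 →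
      S xs lam' y' mus = f xs + xs ⬝ᵥ B.mulVec y' - g y' := by
    intro y' lam' h
    rw [hS]; simp [h, hxs]
  -- the gap forces equality with the saddle value
  have key1 : S x lams ys mu = S xs lams ys mus :=
    le_antisymm (hgap ▸ (hsaddle x lam y mu).1) (hsaddle x lam y mu).2
  have key2 : S xs lam y mus = S xs lams ys mus := hgap ▸ key1
  constructor
  · by_contra hne
    set z : Fin m → ℝ := (1/2 : ℝ) • x + (1/2 : ℝ) • xs with hz
    have hLz : L₁.mulVec z = 0 := by
      simp [hz, mulVec_add, mulVec_smul, hx, hxs]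
    have hfz : f z < (1/2) * f x + (1/2) * f xs :=
      hf.2 trivial trivial hne (by norm_num) (by norm_num) (by norm_num)
    have hdz : z ⬝ᵥ B.mulVec ys
        = (1/2) * (x ⬝ᵥ B.mulVec ys) + (1/2) * (xs ⬝ᵥ B.mulVec ys) := by
      simp [hz, add_dotProduct, smul_dotProduct, smul_eq_mul]
    have h1 := (hsaddle z lam y mus).2
    rw [val₁ z mus hLz] at h1
    have h2 : S x lams ys mu = f x + x ⬝ᵥ B.mulVec ys - g ys := val₁ x mu hx
    have h3 : S xs lams ys mus = f xs + xs ⬝ᵥ B.mulVec ys - g ys := val₁ xs mus hxs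
    rw [h3] at h1 key1
    rw [h2] at key1
    linarith
  · by_contra hne
    set w : Fin n → ℝ := (1/2 : ℝ) • y + (1/2 : ℝ) • ys with hw
    have hLw : L₂.mulVec w = 0 := by
      simp [hw, mulVec_add, mulVec_smul, hy, hys]
    have hgw : g w < (1/2) * g y + (1/2) * g ys :=
      hg.2 trivial trivial hne (by norm_num) (by norm_num) (by norm_num)
    have hdw : xs ⬝ᵥ B.mulVec w
        = (1/2) * (xs ⬝ᵥ B.mulVec y) + (1/2) * (xs ⬝ᵥ B.mulVec ys) := by
      simp [hw, mulVec_add, mulVec_smul, dotProduct_add, dotProduct_smul, smul_eq_mul]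
    have h1 := (hsaddle x lam w mu).1
    rw [val₂ w lam hLw] at h1
    have h2 : S xs lam y mus = f xs + xs ⬝ᵥ B.mulVec y - g y := val₂ y lam hy
    have h3 : S xs lams ys mus = f xs + xs ⬝ᵥ B.mulVec ys - g ys := val₂ ys lams hys
    rw [h3] at h1 key2
    rw [h2] at key2
    linarith
end
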